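/- For all positive integers L and integers a, the identity ∑_{k≥0} O_{L,k}(q) · [2k+1 choose k−a]_q = q^{4T(a)} · [2L choose L−2a−1]_q holds, where O_{L,k}(q) = ∑_{m=0}^{L} q^{2T(k)+2T(m+k)} [L choose m]_q [L−m choose 2k+1]_q and T(j) = j(j+1)/2. -/

import Mathlib

open LaurentPolynomial Finset

noncomputable section

/-- The Gaussian binomial coefficient `[m choose n]_q` as a polynomial in `q`,
defined via the `q`-Pascal recurrence; it equals `(q;q)_m/((q;q)_n (q;q)_{m-n})`
for `0 ≤ n ≤ m`. -/
def gb : ℕ → ℕ → Polynomial ℤ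
  | _, 0 => 1
  | 0, _ + 1 => 0
  | m + 1, n + 1 => gb m n + Polynomial.X ^ (n + 1) * gb m (n + 1)

/-- `[m choose n]_q` with integer indices, zero unless `0 ≤ n ≤ m`,
viewed as a Laurent polynomial in `q`. -/
def qbin (m n : ℤ) : LaurentPolynomial ℤ :=
  if 0 ≤ n ∧ n ≤ m then (gb m.toNat n.toNat).toLaurent else 0

/-- A Laurent polynomial is a polynomial in `q` with nonnegative coefficients. -/
def IsNonneg (x : LaurentPolynomial ℤ) : Prop :=
  ∃ P : Polynomial ℤ, (∀ n, 0 ≤ P.coeff n) ∧ P.toLaurent = x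

/-- The triangular number `T(j) = j(j+1)/2`. -/
def tri (j : ℤ) : ℤ := j * (j + 1) / 2

/-- `O_{L,k}(q) = ∑_{m=0}^{L} q^{2T(k)+2T(m+k)} [L choose m]_q [L-m choose 2k+1]_q`. -/
def Opoly (L k : ℕ) : LaurentPolynomial ℤ :=
  ∑ m ∈ Finset.range (L + 1),
    T (2 * tri k + 2 * tri (m + k)) * (gb L m).toLaurent * (gb (L - m) (2 * k + 1)).toLaurent

/-!
Put `d = 2a + 1`, `y = k - a` and `x = m + k - a`. Two trinomial revisions
`[n, b][n - b, c] = [n, b + c][b + c, b]` and one symmetry turn the `(k, m)` term of the double sum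
into `q^{4T(a)} · q^{x(x+d) + y(y+d)} [L, x][x, y][L - x, y + d]`, and `(k, m) ↦ (x, y)` is a
bijection between the nonzero terms. Summing over `y` and then over `x` is then two applications of
the `q`-Chu–Vandermonde identity `∑_j q^{j(j+d)} [M, j + d][N, j] = [M + N, M - d]`.
-/

open Polynomial

theorem gb_succ_succ (m n : ℕ) : gb (m + 1) (n + 1) = gb m n + X ^ (n + 1) * gb m (n + 1) := rfl

theorem gb_zero_right (m : ℕ) : gb m 0 = 1 := by
  cases m <;> rfl

theorem gb_eq_zero_of_lt : ∀ {m n : ℕ}, m < n → gb m n = 0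
  | 0, _ + 1, _ => rfl
  | m + 1, n + 1, h => by
    rw [gb_succ_succ, gb_eq_zero_of_lt (by omega), gb_eq_zero_of_lt (by omega), mul_zero, add_zero]

theorem gb_self : ∀ m : ℕ, gb m m = 1
  | 0 => rfl
  | m + 1 => by rw [gb_succ_succ, gb_self m, gb_eq_zero_of_lt (by omega), mul_zero, add_zero]

def qfac (n : ℕ) : ℤ[X] := ∏ i ∈ range n, (1 - X ^ (i + 1))

theorem qfac_zero : qfac 0 = 1 := prod_range_zero _

theorem qfac_succ (n : ℕ) : qfac (n + 1) = qfac n * (1 - X ^ (n + 1)) :=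
  prod_range_succ _ n

theorem qfac_ne_zero (n : ℕ) : qfac n ≠ 0 :=
  prod_ne_zero_iff.2 fun i _ h => by
    simpa [coeff_X_pow] using congrArg (coeff · 0) h

theorem gb_mul_qfac_mul_qfac : ∀ n k : ℕ, gb (n + k) n * qfac n * qfac k = qfac (n + k)
  | 0, k => by rw [gb_zero_right, qfac_zero, one_mul, one_mul, zero_add]
  | n + 1, 0 => by rw [gb_self, qfac_zero, one_mul, mul_one, add_zero]
  | n + 1, k + 1 => by
    have h₁ := gb_mul_qfac_mul_qfac n (k + 1)
    have h₂ := gb_mul_qfac_mul_qfac (n + 1) k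
    rw [show n + (k + 1) = n + k + 1 by omega, qfac_succ k] at h₁
    rw [show n + 1 + k = n + k + 1 by omega, qfac_succ n] at h₂
    rw [show n + 1 + (k + 1) = n + k + 1 + 1 by omega, gb_succ_succ, qfac_succ (n + k + 1),
      qfac_succ n, qfac_succ k]
    linear_combination (1 - X ^ (n + 1)) * h₁ + (X ^ (n + 1) * (1 - X ^ (k + 1))) * h₂

theorem gb_symm_add (n k : ℕ) : gb (n + k) n = gb (n + k) k := by
  have h₁ := gb_mul_qfac_mul_qfac n k
  have h₂ := gb_mul_qfac_mul_qfac k n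
  rw [add_comm k n] at h₂
  exact mul_right_cancel₀ (mul_ne_zero (qfac_ne_zero n) (qfac_ne_zero k))
    (by linear_combination h₁ - h₂)

theorem gb_mul_gb (b c r : ℕ) :
    gb (b + c + r) b * gb (c + r) c = gb (b + c + r) (b + c) * gb (b + c) b := by
  refine mul_right_cancel₀ (mul_ne_zero (mul_ne_zero (qfac_ne_zero b) (qfac_ne_zero c))
    (qfac_ne_zero r)) ?_
  have h₁ := gb_mul_qfac_mul_qfac b (c + r)
  have h₂ := gb_mul_qfac_mul_qfac c r
  have h₃ := gb_mul_qfac_mul_qfac (b + c) r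
  have h₄ := gb_mul_qfac_mul_qfac b c
  rw [← add_assoc] at h₁
  calc gb (b + c + r) b * gb (c + r) c * (qfac b * qfac c * qfac r)
      = gb (b + c + r) b * qfac b * (gb (c + r) c * qfac c * qfac r) := by ring
    _ = gb (b + c + r) (b + c) * (gb (b + c) b * qfac b * qfac c) * qfac r := by
      rw [h₂, h₁, h₄, h₃]
    _ = _ := by ring

theorem gb_succ_succ' (n k : ℕ) :
    gb (n + k + 1) (n + 1) = X ^ k * gb (n + k) n + gb (n + k) (n + 1) := by
  cases k with
  | zero => simp [gb_self, gb_eq_zero_of_lt]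
  | succ k =>
    have h₁ : gb (n + 1 + k) k = gb (n + (k + 1)) (n + 1) := by
      rw [← gb_symm_add, add_right_comm, add_assoc]
    have h₂ : gb (n + 1 + k) (k + 1) = gb (n + (k + 1)) n := by
      rw [show n + 1 + k = n + (k + 1) by omega, ← gb_symm_add]
    have h₃ : gb (n + 1 + k + 1) (n + 1) = gb (n + 1 + k + 1) (k + 1) :=
      gb_symm_add (n + 1) (k + 1)
    rw [show n + (k + 1) + 1 = n + 1 + k + 1 by omega, h₃, gb_succ_succ, h₁, h₂]
    ring

theorem qbin_eq_zero_of_neg {m n : ℤ} (h : n < 0) : qbin m n = 0 :=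
  if_neg (by omega)

theorem qbin_eq_zero_of_lt {m n : ℤ} (h : m < n) : qbin m n = 0 :=
  if_neg (by omega)

theorem nonneg_and_le_of_qbin_ne_zero {m n : ℤ} (h : qbin m n ≠ 0) : 0 ≤ n ∧ n ≤ m := by
  by_contra h'
  exact h (if_neg h')

theorem qbin_natCast (m n : ℕ) : qbin m n = (gb m n).toLaurent := by
  rcases le_or_gt n m with h | h
  · exact if_pos ⟨by positivity, by exact_mod_cast h⟩
  · rw [gb_eq_zero_of_lt h, map_zero, qbin_eq_zero_of_lt (by exact_mod_cast h)]

theorem qbin_zero_right {m : ℤ} (h : 0 ≤ m) : qbin m 0 = 1 := by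
  lift m to ℕ using h
  rw [← Nat.cast_zero, qbin_natCast, gb_zero_right, map_one]

theorem qbin_symm (m n : ℤ) : qbin m n = qbin m (m - n) := by
  by_cases h : 0 ≤ n ∧ n ≤ m
  · obtain ⟨n, rfl⟩ := Int.eq_ofNat_of_zero_le h.1
    obtain ⟨k, rfl⟩ := Int.le.dest h.2
    rw [add_sub_cancel_left, ← Nat.cast_add, qbin_natCast, qbin_natCast, gb_symm_add]
  · rw [qbin, qbin, if_neg h, if_neg (by omega)]

theorem qbin_mul (n b c : ℤ) : qbin n b * qbin (n - b) c = qbin n (b + c) * qbin (b + c) b := by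
  by_cases h : 0 ≤ b ∧ 0 ≤ c ∧ b + c ≤ n
  · obtain ⟨b, rfl⟩ := Int.eq_ofNat_of_zero_le h.1
    obtain ⟨c, rfl⟩ := Int.eq_ofNat_of_zero_le h.2.1
    obtain ⟨r, rfl⟩ := Int.le.dest h.2.2
    rw [show (b : ℤ) + c + r - b = ↑(c + r) by push_cast; ring, ← Nat.cast_add, ← Nat.cast_add,
      qbin_natCast, qbin_natCast, qbin_natCast, qbin_natCast, ← map_mul, ← map_mul, gb_mul_gb]
  · have lhs : qbin n b * qbin (n - b) c = 0 := by
      unfold qbin; split_ifs <;> first | omega | simp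
    have rhs : qbin n (b + c) * qbin (b + c) b = 0 := by
      unfold qbin; split_ifs <;> first | omega | simp
    rw [lhs, rhs]

theorem qbin_succ' (m : ℕ) (n : ℤ) :
    qbin (m + 1) n = T (m + 1 - n) * qbin m (n - 1) + qbin m n := by
  rcases lt_trichotomy n 0 with hn | rfl | hn
  · rw [qbin_eq_zero_of_neg hn, qbin_eq_zero_of_neg hn, qbin_eq_zero_of_neg (by omega),
      mul_zero, add_zero]
  · rw [qbin_zero_right (by positivity), qbin_zero_right (by positivity),
      qbin_eq_zero_of_neg (by norm_num), mul_zero, zero_add]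
  obtain ⟨n, rfl⟩ : ∃ n' : ℕ, n = n' + 1 := ⟨(n - 1).toNat, by omega⟩
  rcases le_or_gt n m with h | h
  · obtain ⟨k, rfl⟩ := Nat.exists_eq_add_of_le h
    have hpascal := congrArg Polynomial.toLaurent (gb_succ_succ' n k)
    rw [map_add, map_mul, Polynomial.toLaurent_X_pow, ← qbin_natCast, ← qbin_natCast,
      ← qbin_natCast] at hpascal
    push_cast at hpascal ⊢
    rw [hpascal, add_sub_cancel_right, show (n : ℤ) + k + 1 - (n + 1) = k by ring]
  · rw [qbin_eq_zero_of_lt (by omega), qbin_eq_zero_of_lt (by omega),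
      qbin_eq_zero_of_lt (by omega), mul_zero, add_zero]

theorem qbin_vandermonde (M N : ℕ) (d : ℤ) :
    ∑ j ∈ range (N + 1), T (j * (j + d)) * (qbin M (j + d) * qbin N j) = qbin (M + N) (M - d) := by
  induction N generalizing d with
  | zero =>
    rw [sum_range_one, Nat.cast_zero, zero_mul, T_zero, one_mul, zero_add, add_zero,
      qbin_zero_right le_rfl, mul_one, qbin_symm]
  | succ N ih =>
    -- With Pascal's rule in the form `qbin_succ'`, shifting `j` by one turns the exponent
    -- `j (j + d)` into `j (j + d + 1)` up to a factor independent of `j`.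
    have hshift : ∑ j ∈ range (N + 2),
        T (j * (j + d)) * (qbin M (j + d) * (T (N + 1 - j) * qbin N (j - 1))) =
          T (N + d + 1) * qbin (M + N) (M - (d + 1)) := by
      rw [sum_range_succ', ← ih (d + 1), mul_sum, Nat.cast_zero, zero_sub,
        qbin_eq_zero_of_neg neg_one_lt_zero, mul_zero, mul_zero, mul_zero, add_zero]
      refine sum_congr rfl fun j _ => ?_
      have hexp : (T ((j + 1) * (j + d + 1)) * T (N + 1 - (j + 1)) : LaurentPolynomial ℤ) =
          T (N + d + 1) * T (j * (j + d + 1)) := by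
        rw [← T_add, ← T_add]
        ring_nf
      push_cast
      rw [add_sub_cancel_right, ← add_assoc, add_right_comm (j : ℤ) 1 d]
      linear_combination (qbin M (j + d + 1) * qbin N j) * hexp
    have hdrop : ∑ j ∈ range (N + 2), T (j * (j + d)) * (qbin M (j + d) * qbin N j) =
        qbin (M + N) (M - d) := by
      rw [sum_range_succ, qbin_eq_zero_of_lt (m := N) (by push_cast; omega), mul_zero, mul_zero,
        add_zero, ih]
    have hpascal (j : ℕ) : qbin ↑(N + 1) j = T (N + 1 - j) * qbin N (j - 1) + qbin N j := by
      push_cast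
      exact qbin_succ' N j
    rw [show (M : ℤ) + ↑(N + 1) = ↑(M + N) + 1 by push_cast; ring, qbin_succ', Nat.cast_add M N,
      show (M : ℤ) + N + 1 - (M - d) = N + d + 1 by ring, sub_sub, ← hshift, ← hdrop,
      ← sum_add_distrib]
    refine sum_congr rfl fun j _ => ?_
    rw [hpascal]
    ring

theorem two_mul_tri (j : ℤ) : 2 * tri j = j * (j + 1) :=
  Int.mul_ediv_cancel' (Int.even_mul_succ_self j).two_dvd

def doubleVandermondeTerm (L : ℕ) (d x y : ℤ) : LaurentPolynomial ℤ :=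
  T (x * (x + d) + y * (y + d)) * (qbin L x * qbin x y * qbin (L - x) (y + d))

theorem bounds_of_doubleVandermondeTerm_ne_zero {L : ℕ} {d x y : ℤ}
    (h : doubleVandermondeTerm L d x y ≠ 0) :
    0 ≤ y ∧ y ≤ x ∧ x ≤ L ∧ 0 ≤ y + d ∧ y + d ≤ L - x := by
  simp only [doubleVandermondeTerm, ne_eq, mul_eq_zero, not_or] at h
  have hx := nonneg_and_le_of_qbin_ne_zero h.2.1.1
  have hy := nonneg_and_le_of_qbin_ne_zero h.2.1.2
  have hyd := nonneg_and_le_of_qbin_ne_zero h.2.2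
  omega

theorem Opoly_term_mul_qbin {L m : ℕ} (k : ℕ) (a : ℤ) (hm : m ≤ L) :
    T (2 * tri k + 2 * tri (m + k)) * (gb L m).toLaurent * (gb (L - m) (2 * k + 1)).toLaurent *
        qbin (2 * k + 1) (k - a) =
      T (4 * tri a) * doubleVandermondeTerm L (2 * a + 1) (m + k - a) (k - a) := by
  set x : ℤ := m + k - a
  set y : ℤ := k - a
  rw [← qbin_natCast, ← qbin_natCast, Nat.cast_sub hm]
  push_cast
  have h₁ : qbin (L - m) (2 * k + 1) * qbin (2 * k + 1) y =
      qbin (L - m) y * qbin (L - x) (y + (2 * a + 1)) := by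
    have h := qbin_mul (L - m) y (y + (2 * a + 1))
    rwa [show y + (y + (2 * a + 1)) = 2 * k + 1 by ring, show (L : ℤ) - m - y = L - x by ring,
      eq_comm] at h
  have h₂ : qbin L m * qbin (L - m) y = qbin L x * qbin x y := by
    rw [qbin_mul, show (m : ℤ) + y = x by ring, qbin_symm x, show x - m = y by ring]
  have hexp : (T (2 * tri k + 2 * tri (m + k)) : LaurentPolynomial ℤ) =
      T (4 * tri a) * T (x * (x + (2 * a + 1)) + y * (y + (2 * a + 1))) := by
    rw [← T_add]
    congr 1
    linear_combination two_mul_tri k + two_mul_tri (m + k) - 2 * two_mul_tri a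
  rw [doubleVandermondeTerm]
  linear_combination (T (2 * tri k + 2 * tri (m + k)) * qbin L m) * h₁ +
    (T (2 * tri k + 2 * tri (m + k)) * qbin (L - x) (y + (2 * a + 1))) * h₂ +
    (qbin L x * qbin x y * qbin (L - x) (y + (2 * a + 1))) * hexp

theorem Opoly_eq_zero_of_le {L k : ℕ} (hk : L ≤ k) : Opoly L k = 0 :=
  sum_eq_zero fun m _ => by rw [gb_eq_zero_of_lt (m := L - m) (by omega), map_zero, mul_zero]

theorem Opoly_mul_qbin (L k : ℕ) (a : ℤ) :
    Opoly L k * qbin (2 * k + 1) (k - a) =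
      ∑ m ∈ range (L + 1),
        T (4 * tri a) * doubleVandermondeTerm L (2 * a + 1) (m + k - a) (k - a) :=
  (sum_mul _ _ _).trans <| sum_congr rfl fun _ hm =>
    Opoly_term_mul_qbin k a (Nat.lt_succ_iff.mp (mem_range.mp hm))

theorem sum_doubleVandermondeTerm_shear (L : ℕ) (a : ℤ) :
    ∑ k ∈ range L, ∑ m ∈ range (L + 1), doubleVandermondeTerm L (2 * a + 1) (m + k - a) (k - a) =
      ∑ p ∈ range (L + 1) ×ˢ range (L + 1), doubleVandermondeTerm L (2 * a + 1) p.1 p.2 := by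
  rw [← sum_product']
  refine sum_bij_ne_zero (fun p _ _ => ((p.2 + p.1 - a).toNat, (p.1 - a).toNat)) ?_ ?_ ?_ ?_
  · intro p _ hp
    have := bounds_of_doubleVandermondeTerm_ne_zero hp
    simp only [mem_product, mem_range]
    omega
  · intro p _ hp q _ hq hpq
    have := bounds_of_doubleVandermondeTerm_ne_zero hp
    have := bounds_of_doubleVandermondeTerm_ne_zero hq
    simp only [Prod.ext_iff] at hpq ⊢
    omega
  · intro q _ hq
    have := bounds_of_doubleVandermondeTerm_ne_zero hq
    refine ⟨((q.2 + a).toNat, q.1 - q.2), ?_, ?_, ?_⟩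
    · simp only [mem_product, mem_range]
      omega
    · convert hq using 2 <;> omega
    · ext <;> omega
  · intro p _ hp
    have := bounds_of_doubleVandermondeTerm_ne_zero hp
    congr 1 <;> omega

theorem sum_doubleVandermondeTerm (L : ℕ) (d : ℤ) :
    ∑ p ∈ range (L + 1) ×ˢ range (L + 1), doubleVandermondeTerm L d p.1 p.2 =
      qbin (L + L) (L - d) := by
  rw [sum_product, ← qbin_vandermonde]
  refine sum_congr rfl fun x hx => ?_
  obtain ⟨r, rfl⟩ := Nat.exists_eq_add_of_le (Nat.lt_succ_iff.mp (mem_range.mp hx))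
  have hinner : ∑ y ∈ range (x + r + 1), T (y * (y + d)) * (qbin r (y + d) * qbin x y) =
      qbin (x + r) (x + d) := by
    rw [← sum_subset (range_subset_range.mpr (by omega : x + 1 ≤ x + r + 1)), qbin_vandermonde,
      qbin_symm]
    · ring_nf
    · intro y _ hy
      rw [qbin_eq_zero_of_lt (m := x) (by simp only [mem_range] at hy; omega), mul_zero, mul_zero]
  simp only [doubleVandermondeTerm, T_add, Nat.cast_add, add_sub_cancel_left]
  rw [← hinner, sum_mul, mul_sum]
  exact sum_congr rfl fun y _ => by ring

theorem berkovich_warnaar_transformation_general (L : ℕ) (a : ℤ) :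
    ∑ᶠ k : ℕ, Opoly L k * qbin (2 * k + 1) ((k : ℤ) - a) =
      T (4 * tri a) * qbin (2 * L) ((L : ℤ) - 2 * a - 1) := by
  have hsupp : (Function.support fun k => Opoly L k * qbin (2 * k + 1) ((k : ℤ) - a)) ⊆
      range L := fun k hk => by
    by_contra hkL
    rw [Function.mem_support, Opoly_eq_zero_of_le (by simpa using hkL), zero_mul] at hk
    exact hk rfl
  rw [finsum_eq_finsetSum_of_support_subset _ hsupp]
  simp only [Opoly_mul_qbin, ← mul_sum]
  rw [sum_doubleVandermondeTerm_shear, sum_doubleVandermondeTerm, ← two_mul, sub_add_eq_sub_sub]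

/-- The Berkovich–Warnaar transformation:
`∑_{k ≥ 0} O_{L,k}(q) [2k+1 choose k-a]_q = q^{4T(a)} [2L choose L-2a-1]_q`. -/
theorem berkovich_warnaar_transformation (L : ℕ) (hL : 0 < L) (a : ℤ) :
    ∑ᶠ k : ℕ, Opoly L k * qbin (2 * k + 1) ((k : ℤ) - a) =
      T (4 * tri a) * qbin (2 * L) ((L : ℤ) - 2 * a - 1) :=
  berkovich_warnaar_transformation_general L a

end
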